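/- arXiv:1402.3159 — 2 statements merged into one kernel-verified Lean document; each statement's English description precedes it below -/
import Mathlib

section
/- Let R be a commutative ring, s ≥ 1, and assign to each variable x_i a positive integer weight k_i, making the polynomial ring R[x_1,…,x_s] a graded ring where a monomial x_1^{a_1}⋯x_s^{a_s} has weight a_1k_1+⋯+a_sk_s. Fix a natural number M and for each i let α_i be the least nonnegative integer with α_i k_i > M. Then every monomial of weight strictly greater than M is a product of monomials from the set {x_1^{α_1},…,x_s^{α_s}} ∪ {x_1^{i_1}⋯x_s^{i_s} : i_1k_1+⋯+i_sk_s > M and 0 ≤ i_j < 2α_j for all j}. -/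
/-!
Strong induction on the exponent vector `a`. If every coordinate satisfies `a j < 2 * α j`,
then `a` is itself one of the bounded generators. Otherwise some `a j ≥ 2 * α j`; split off
`x_j ^ α j`. The rest still has `j`-th exponent at least `α j`, so its weight is still `> M`,
and it is strictly smaller than `a`.
-/

open Matrix

namespace WeightedMonomial

variable {ι : Type*}

theorem update_sub_add_single [DecidableEq ι] (a : ι → ℕ) {j : ι} {n : ℕ} (hn : n ≤ a j) :
    Function.update a j (a j - n) + Pi.single j n = a := by
  funext i
  by_cases h : i = j
  · subst h
    simp only [Pi.add_apply, Function.update_self, Pi.single_eq_same]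
    omega
  · simp [h]

variable [Fintype ι]

theorem apply_mul_le_dotProduct (a k : ι → ℕ) (j : ι) : a j * k j ≤ a ⬝ᵥ k :=
  Finset.single_le_sum (f := fun i ↦ a i * k i) (fun _ _ ↦ Nat.zero_le _) (Finset.mem_univ j)

variable [DecidableEq ι]

def generators (k α : ι → ℕ) (M : ℕ) : Set (ι → ℕ) :=
  Set.range (fun i ↦ Pi.single i (α i)) ∪ {b | M < b ⬝ᵥ k ∧ ∀ j, b j < 2 * α j}

theorem lt_dotProduct_update_sub {k α a : ι → ℕ} {M : ℕ} {j : ι} (hα : M < α j * k j)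
    (hj : 2 * α j ≤ a j) : M < Function.update a j (a j - α j) ⬝ᵥ k :=
  calc M < α j * k j := hα
    _ ≤ Function.update a j (a j - α j) j * k j := by
        gcongr
        rw [Function.update_self]
        omega
    _ ≤ Function.update a j (a j - α j) ⬝ᵥ k := apply_mul_le_dotProduct _ _ j

theorem mem_closure_generators {k α : ι → ℕ} {M : ℕ} (hα : ∀ i, M < α i * k i)
    (a : ι → ℕ) (ha : M < a ⬝ᵥ k) : a ∈ AddSubmonoid.closure (generators k α M) := by
  induction a using WellFoundedLT.induction with
  | _ a ih =>
  by_cases hsmall : ∀ j, a j < 2 * α j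
  · exact AddSubmonoid.subset_closure (Or.inr ⟨ha, hsmall⟩)
  push Not at hsmall
  obtain ⟨j, hj⟩ := hsmall
  have hαj : 0 < α j := Nat.pos_of_ne_zero fun h ↦ by simpa [h] using hα j
  rw [← update_sub_add_single a (show α j ≤ a j by omega)]
  refine add_mem (ih _ ?_ (lt_dotProduct_update_sub (hα j) hj)) ?_
  · exact update_lt_self_iff.mpr (by omega)
  · exact AddSubmonoid.subset_closure (Or.inl ⟨j, rfl⟩)

end WeightedMonomial

open WeightedMonomial in
theorem weighted_monomial_generation_general (s : ℕ) (k : Fin s → ℕ)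
    (M : ℕ) (α : Fin s → ℕ)
    (hα : ∀ i, M < α i * k i ∧ ∀ β : ℕ, β < α i → ¬ M < β * k i)
    (a : Fin s → ℕ) (ha : M < ∑ i, a i * k i) :
    ∃ l : Multiset (Fin s → ℕ),
      (∀ b ∈ l,
        (∃ i, b = Pi.single i (α i)) ∨
        (M < ∑ j, b j * k j ∧ ∀ j, b j < 2 * α j)) ∧
      l.sum = a := by
  obtain ⟨l, hl, rfl⟩ :=
    AddSubmonoid.exists_multiset_of_mem_closure (mem_closure_generators (fun i ↦ (hα i).1) a ha)
  exact ⟨l, fun b hb ↦ (hl b hb).imp (fun ⟨i, hi⟩ ↦ ⟨i, hi.symm⟩) id, rfl⟩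

/-- Lemma 3.3 (combinatorial core): every exponent vector of weight `> M` is a
sum of exponent vectors from the listed finite generating set. -/
theorem weighted_monomial_generation (s : ℕ) (hs : 1 ≤ s) (k : Fin s → ℕ)
    (hk : ∀ i, 1 ≤ k i) (M : ℕ) (α : Fin s → ℕ)
    (hα : ∀ i, M < α i * k i ∧ ∀ β : ℕ, β < α i → ¬ M < β * k i)
    (a : Fin s → ℕ) (ha : M < ∑ i, a i * k i) :
    ∃ l : Multiset (Fin s → ℕ),
      (∀ b ∈ l,
        (∃ i, b = Pi.single i (α i)) ∨
        (M < ∑ j, b j * k j ∧ ∀ j, b j < 2 * α j)) ∧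
      l.sum = a :=
  weighted_monomial_generation_general s k M α hα a ha
end

section
/- With weights k_1,…,k_s ≥ 1, M ∈ ℕ, and α_i the least nonnegative integer with α_i k_i > M: if an exponent vector a = (a_1,…,a_s) satisfies ∑ a_i k_i > 2(α_1k_1+⋯+α_sk_s), then writing a_i = α_i q_i + r_i with 0 ≤ r_i < α_i, there exists an index j₀ with q_{j₀} ≥ 1, and a decomposes as a = h₁ + h₂ where h₁ = (r_1,…,r_{j₀-1}, r_{j₀}+α_{j₀}, r_{j₀+1},…,r_s) and h₂ = a − h₁, and both h₁ and h₂ have weight strictly greater than M (h₂ possibly being a nonnegative combination of the vectors α_i e_i). -/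
/-!
Since the weight of `a` exceeds that of `α`, some coordinate satisfies `α j₀ < a j₀`, i.e.
`q_{j₀} ≥ 1`. Write `h₁ i = a i % α i + t i * α i` with `t = Pi.single j₀ 1`. Its `j₀`-th
coordinate is at least `α j₀`, which alone has weight `> M`. Every coordinate of `h₁` is below
`2 * α i`, so `h₁` weighs less than `a`; hence `h₂ = a - h₁`, whose coordinates are multiples of
the `α i`, has a nonzero coordinate, which is then at least `α i`, and so `h₂` weighs more than `M`.
-/

namespace Nat

theorem mod_add_mul_le_of_le_div {a n t : ℕ} (ht : t ≤ a / n) : a % n + t * n ≤ a := by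
  have := Nat.div_add_mod' a n
  have := Nat.mul_le_mul_right n ht
  omega

theorem sub_mod_add_mul_of_le_div {a n t : ℕ} (ht : t ≤ a / n) :
    a - (a % n + t * n) = (a / n - t) * n := by
  have := Nat.div_add_mod' a n
  have := Nat.mul_le_mul_right n ht
  rw [Nat.sub_mul]
  omega

end Nat

section Weight

variable {ι : Type*} [Fintype ι] {k a b h : ι → ℕ}

theorem exists_lt_of_sum_mul_lt (hlt : ∑ i, b i * k i < ∑ i, a i * k i) : ∃ i, b i < a i := by
  obtain ⟨i, -, hi⟩ := Finset.exists_lt_of_sum_lt hlt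
  exact ⟨i, Nat.lt_of_mul_lt_mul_right hi⟩

theorem lt_sum_mul_of_le {M : ℕ} {j : ι} (hM : M < b j * k j) (hle : b j ≤ h j) :
    M < ∑ i, h i * k i :=
  calc M < b j * k j := hM
    _ ≤ h j * k j := Nat.mul_le_mul_right _ hle
    _ ≤ ∑ i, h i * k i :=
      Finset.single_le_sum (f := fun i => h i * k i) (fun _ _ => Nat.zero_le _) (Finset.mem_univ j)

theorem lt_sum_mul_of_dvd {M : ℕ} (hM : ∀ i, M < b i * k i) (hdvd : ∀ i, b i ∣ h i)
    (hne : ∃ i, 0 < h i) : M < ∑ i, h i * k i := by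
  obtain ⟨j, hj⟩ := hne
  exact lt_sum_mul_of_le (hM j) (Nat.le_of_dvd hj (hdvd j))

theorem sum_mod_add_mul_mul_lt {α t : ι → ℕ} (hα : ∀ i, 0 < α i) (ht : ∀ i, t i ≤ 1)
    (ha : 2 * ∑ i, α i * k i < ∑ i, a i * k i) :
    ∑ i, (a i % α i + t i * α i) * k i < ∑ i, a i * k i :=
  calc _ ≤ ∑ i, 2 * α i * k i := by
        gcongr with i
        nlinarith [Nat.mod_lt (a i) (hα i), ht i]
    _ = 2 * ∑ i, α i * k i := by simp only [Finset.mul_sum, mul_assoc]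
    _ < ∑ i, a i * k i := ha

end Weight

theorem weighted_monomial_induction_step_general (s : ℕ) (k : Fin s → ℕ)
    (M : ℕ) (α : Fin s → ℕ)
    (hα : ∀ i, M < α i * k i ∧ ∀ β : ℕ, β < α i → ¬ M < β * k i)
    (a : Fin s → ℕ) (ha : 2 * ∑ i, α i * k i < ∑ i, a i * k i) :
    ∃ j₀ : Fin s, 1 ≤ a j₀ / α j₀ ∧
      ∀ h₁ h₂ : Fin s → ℕ,
        (h₁ = fun i => if i = j₀ then a i % α i + α i else a i % α i) →
        (h₂ = fun i => a i - h₁ i) →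
        (∀ i, a i = h₁ i + h₂ i) ∧
        (M < ∑ i, h₁ i * k i) ∧
        (M < ∑ i, h₂ i * k i) ∧
        (∃ c : Fin s → ℕ, ∀ i, h₂ i = c i * α i) := by
  have hαk i : M < α i * k i := (hα i).1
  have hα₀ i : 0 < α i := Nat.pos_of_ne_zero fun h0 => by simpa [h0] using hαk i
  obtain ⟨j₀, hj₀⟩ := exists_lt_of_sum_mul_lt (b := α) (k := k) (a := a) (by omega)
  refine ⟨j₀, (Nat.one_le_div_iff (hα₀ j₀)).2 hj₀.le, ?_⟩
  rintro h₁ h₂ rfl rfl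
  set t : Fin s → ℕ := Pi.single j₀ 1
  have ht₁ i : t i ≤ 1 := by by_cases hi : i = j₀ <;> simp [t, hi]
  have ht i : t i ≤ a i / α i := by
    by_cases hi : i = j₀
    · subst hi; simpa [t] using (Nat.one_le_div_iff (hα₀ i)).2 hj₀.le
    · simp [t, hi]
  have h₁_eq : (fun i => if i = j₀ then a i % α i + α i else a i % α i) =
      fun i => a i % α i + t i * α i := by
    funext i; by_cases hi : i = j₀ <;> simp [t, hi]
  have hsub i : a i - (a i % α i + t i * α i) = (a i / α i - t i) * α i :=
    Nat.sub_mod_add_mul_of_le_div (ht i)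
  obtain ⟨i, hi⟩ := exists_lt_of_sum_mul_lt (sum_mod_add_mul_mul_lt hα₀ ht₁ ha)
  rw [h₁_eq]
  exact ⟨fun i => (Nat.add_sub_of_le (Nat.mod_add_mul_le_of_le_div (ht i))).symm,
    lt_sum_mul_of_le (hαk j₀) (by simp [t]),
    lt_sum_mul_of_dvd hαk (fun i => hsub i ▸ dvd_mul_left _ _) ⟨i, Nat.sub_pos_of_lt hi⟩,
    ⟨_, hsub⟩⟩

/-- The inductive step in the proof of Lemma 3.3. -/
theorem weighted_monomial_induction_step (s : ℕ) (hs : 1 ≤ s) (k : Fin s → ℕ)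
    (hk : ∀ i, 1 ≤ k i) (M : ℕ) (α : Fin s → ℕ)
    (hα : ∀ i, M < α i * k i ∧ ∀ β : ℕ, β < α i → ¬ M < β * k i)
    (a : Fin s → ℕ) (ha : 2 * ∑ i, α i * k i < ∑ i, a i * k i) :
    ∃ j₀ : Fin s, 1 ≤ a j₀ / α j₀ ∧
      ∀ h₁ h₂ : Fin s → ℕ,
        (h₁ = fun i => if i = j₀ then a i % α i + α i else a i % α i) →
        (h₂ = fun i => a i - h₁ i) →
        (∀ i, a i = h₁ i + h₂ i) ∧
        (M < ∑ i, h₁ i * k i) ∧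
        (M < ∑ i, h₂ i * k i) ∧
        (∃ c : Fin s → ℕ, ∀ i, h₂ i = c i * α i) :=
  weighted_monomial_induction_step_general s k M α hα a ha
end
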